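/- arXiv:2106.10689 — 3 statements merged into one kernel-verified Lean document; each statement's English description precedes it below -/
import Mathlib

section
/- Unbiasedness of the NeuS weight (first-order): suppose g is affine with slope -c < 0 on [t_l, t_r] and g(t*) = 0 with t* ∈ (t_l, t_r). Then the weight function w(t) = T(t)ρ(t), with ρ(t) = -g'(t)φ_s(g(t))/Φ_s(g(t)) and T(t) = exp(-∫_{t_l}^t ρ), attains its maximum on [t_l, t_r] at t = t*. -/
open Real Filter MeasureTheory

/-- The sigmoid function `Φ_s(x) = (1 + e^{-sx})⁻¹`. -/
noncomputable def Phi (s x : ℝ) : ℝ := (1 + Real.exp (-s * x))⁻¹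

/-- The logistic density `φ_s(x) = s e^{-sx} / (1 + e^{-sx})²`. -/
noncomputable def phi (s x : ℝ) : ℝ :=
  s * Real.exp (-s * x) / (1 + Real.exp (-s * x)) ^ 2

lemma Phi_pos (s x : ℝ) : 0 < Phi s x := by
  unfold Phi; positivity

lemma continuous_phi (s : ℝ) : Continuous (phi s) := by
  unfold phi
  exact Continuous.div (by continuity) (by continuity) (fun x => by positivity)

lemma continuous_Phi (s : ℝ) : Continuous (Phi s) := by
  unfold Phi
  exact Continuous.inv₀ (by continuity) (fun x => by positivity)

lemma hasDerivAt_Phi (s x : ℝ) : HasDerivAt (Phi s) (phi s x) x := by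
  have h1 : HasDerivAt (fun x : ℝ => 1 + Real.exp (-s * x))
      (Real.exp (-s * x) * -s) x := by
    have := (Real.hasDerivAt_exp (-s * x)).comp x
      ((hasDerivAt_id x).const_mul (-s))
    simpa [mul_comm] using this.const_add 1
  have h2 := h1.inv (by positivity)
  refine h2.congr_deriv ?_
  unfold phi
  have hx : (0:ℝ) < 1 + Real.exp (-s * x) := by positivity
  field_simp

lemma phi_le (s : ℝ) (hs : 0 < s) (x : ℝ) : phi s x ≤ s / 4 := by
  unfold phi
  rw [div_le_div_iff₀ (by positivity) (by norm_num)]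
  nlinarith [sq_nonneg (1 - Real.exp (-s * x)), Real.exp_pos (-s * x), hs.le,
    mul_nonneg hs.le (sq_nonneg (1 - Real.exp (-s * x)))]

lemma phi_zero (s : ℝ) : phi s 0 = s / 4 := by
  unfold phi
  norm_num

/-- Unbiasedness of the NeuS weight (first order): for an affine SDF with
slope `-c < 0` on `[t_l, t_r]` vanishing at `t* ∈ (t_l, t_r)`, the weight
`w(t) = T(t) ρ(t)` attains its maximum on `[t_l, t_r]` at `t = t*`. -/
theorem neus_weight_unbiased (s c tl tr tstar : ℝ) (hs : 0 < s) (hc : 0 < c)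
    (hstar : tstar ∈ Set.Ioo tl tr)
    (g : ℝ → ℝ) (hg : ∀ t ∈ Set.Icc tl tr, g t = -c * (t - tstar))
    (ρ T w : ℝ → ℝ)
    (hρ : ρ = fun t => c * phi s (g t) / Phi s (g t))
    (hT : T = fun t => Real.exp (-(∫ u in tl..t, ρ u)))
    (hw : w = fun t => T t * ρ t) :
    ∀ t ∈ Set.Icc tl tr, w t ≤ w tstar := by
  set y : ℝ → ℝ := fun u => -c * (u - tstar) with hy
  set f : ℝ → ℝ := fun u => c * phi s (y u) / Phi s (y u) with hf
  set F : ℝ → ℝ := fun u => -Real.log (Phi s (y u)) with hFdef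
  have hF : ∀ u : ℝ, HasDerivAt F (f u) u := by
    intro u
    have h1 : HasDerivAt y (-c) u := by
      simpa [hy, neg_mul] using ((hasDerivAt_id u).sub_const tstar).const_mul (-c)
    have h2 : HasDerivAt (fun u => Phi s (y u)) (phi s (y u) * -c) u :=
      (hasDerivAt_Phi s (y u)).comp u h1
    have h3 := (h2.log (Phi_pos s (y u)).ne').neg
    refine h3.congr_deriv ?_
    show _ = c * phi s (y u) / Phi s (y u)
    field_simp
  have hcont : Continuous f := by
    apply Continuous.div
    · exact continuous_const.mul ((continuous_phi s).comp (by continuity))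
    · exact (continuous_Phi s).comp (by continuity)
    · intro u; exact (Phi_pos s (y u)).ne'
  -- closed form for w on Icc
  have key : ∀ u ∈ Set.Icc tl tr, w u = c * phi s (y u) / Phi s (y tl) := by
    intro u hu
    have hint : (∫ x in tl..u, ρ x) = F u - F tl := by
      rw [show (∫ x in tl..u, ρ x) = ∫ x in tl..u, f x from by
        apply intervalIntegral.integral_congr
        intro x hx
        rw [Set.uIcc_of_le hu.1] at hx
        have hx' : x ∈ Set.Icc tl tr := ⟨hx.1, hx.2.trans hu.2⟩
        rw [hρ]
        simp only [hg x hx', hy, hf]]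
      exact intervalIntegral.integral_eq_sub_of_hasDerivAt
        (fun x _ => hF x) (hcont.intervalIntegrable _ _)
    have hT' : T u = Phi s (y u) / Phi s (y tl) := by
      rw [hT]
      simp only [hint, hFdef]
      rw [show -(-Real.log (Phi s (y u)) - -Real.log (Phi s (y tl)))
        = Real.log (Phi s (y u)) - Real.log (Phi s (y tl)) by ring,
        Real.exp_sub, Real.exp_log (Phi_pos s (y u)), Real.exp_log (Phi_pos s (y tl))]
    simp only [hw, hρ, hg u hu]
    rw [hT']
    show Phi s (y u) / Phi s (y tl) * (c * phi s (y u) / Phi s (y u))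
      = c * phi s (y u) / Phi s (y tl)
    have h1 := (Phi_pos s (y u)).ne'
    have h2 := (Phi_pos s (y tl)).ne'
    field_simp
  intro t ht
  have htstar : tstar ∈ Set.Icc tl tr := Set.mem_Icc.2 ⟨hstar.1.le, hstar.2.le⟩
  rw [key t ht, key tstar htstar]
  have : y tstar = 0 := by simp [hy]
  rw [this, phi_zero]
  gcongr
  · exact (Phi_pos s (y tl)).le
  · exact phi_le s hs (y t)
end

section
/- Bias of the naive volume-rendering weight: let g(t) = -c(t - t*) with c > 0 (affine SDF along a ray), σ(t) = φ_s(g(t)), T(t) = exp(-∫₀^t σ), and w(t) = T(t)σ(t). Then w'(t*) = -T(t*)·φ_s(0)² < 0; in particular w does not attain a local maximum at the surface point t*. -/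
open Real Filter MeasureTheory

/-!
With `T(t) = exp(-∫₀^t σ)` one has `T' = -σ T`, so `(T σ)' = T (σ' - σ²)` for any
continuous density `σ`. For `σ = φ_s ∘ g` the chain rule gives `σ'(t*) = φ_s'(0) g' = 0`,
since the logistic density is stationary at its mode `g(t*) = 0`; hence `w'(t*) = -T(t*) φ_s(0)²`,
which is negative because `T > 0` and `φ_s(0) = s / 4 > 0`.
-/

lemma phi_pos {s : ℝ} (hs : 0 < s) (x : ℝ) : 0 < phi s x := by
  unfold phi
  positivity

lemma hasDerivAt_phi (s x : ℝ) :
    HasDerivAt (phi s)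
      (s ^ 2 * exp (-s * x) * (exp (-s * x) - 1) / (1 + exp (-s * x)) ^ 3) x := by
  have hexp : HasDerivAt (fun x => exp (-s * x)) (exp (-s * x) * -s) x := by
    simpa using ((hasDerivAt_id' x).const_mul (-s)).exp
  have hden : (1 + exp (-s * x)) ^ 2 ≠ 0 := by positivity
  refine ((hexp.const_mul s).div ((hexp.const_add 1).pow 2) hden).congr_deriv ?_
  simp only [Pi.pow_apply]
  field_simp
  ring

lemma hasDerivAt_phi_zero (s : ℝ) : HasDerivAt (phi s) 0 0 := by
  simpa using hasDerivAt_phi s 0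

lemma hasDerivAt_transmittance {σ : ℝ → ℝ} (hσ : Continuous σ) (t : ℝ) :
    HasDerivAt (fun t => exp (-∫ u in (0 : ℝ)..t, σ u))
      (-σ t * exp (-∫ u in (0 : ℝ)..t, σ u)) t := by
  have hint : HasDerivAt (fun t => ∫ u in (0 : ℝ)..t, σ u) (σ t) t :=
    intervalIntegral.integral_hasDerivAt_right (hσ.intervalIntegrable 0 t)
      (hσ.stronglyMeasurableAtFilter _ _) hσ.continuousAt
  exact ((hasDerivAt_exp _).comp t hint.neg).congr_deriv (by simp only [Pi.neg_apply]; ring)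

lemma hasDerivAt_transmittance_mul {σ : ℝ → ℝ} (hσ : Continuous σ) {σ' t : ℝ}
    (hσ' : HasDerivAt σ σ' t) :
    HasDerivAt (fun t => exp (-∫ u in (0 : ℝ)..t, σ u) * σ t)
      (exp (-∫ u in (0 : ℝ)..t, σ u) * (σ' - σ t ^ 2)) t :=
  ((hasDerivAt_transmittance hσ t).mul hσ').congr_deriv (by ring)

theorem naive_weight_biased_general (s c tstar : ℝ) (hs : 0 < s)
    (σ T w : ℝ → ℝ)
    (hσ : σ = fun t => phi s (-c * (t - tstar)))
    (hT : T = fun t => Real.exp (-(∫ u in (0 : ℝ)..t, σ u)))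
    (hw : w = fun t => T t * σ t) :
    HasDerivAt w (-(T tstar) * (phi s 0) ^ 2) tstar ∧
      -(T tstar) * (phi s 0) ^ 2 < 0 := by
  have hσ_cont : Continuous σ := hσ ▸ (continuous_phi s).comp (by fun_prop)
  have hσ_deriv : HasDerivAt σ 0 tstar := by
    have hg : HasDerivAt (fun t => -c * (t - tstar)) (-c) tstar := by
      simpa using ((hasDerivAt_id tstar).sub_const tstar).const_mul (-c)
    have hφ : HasDerivAt (phi s) 0 (-c * (tstar - tstar)) := by
      simpa using hasDerivAt_phi_zero s
    rw [hσ]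
    exact (hφ.comp tstar hg).congr_deriv (zero_mul _)
  have hσ_tstar : σ tstar = phi s 0 := by simp [hσ]
  have hT_pos : 0 < T tstar := by simp only [hT]; positivity
  subst hw hT
  refine ⟨?_, ?_⟩
  · exact (hasDerivAt_transmittance_mul hσ_cont hσ_deriv).congr_deriv (by rw [hσ_tstar]; ring)
  · rw [neg_mul]
    exact neg_neg_of_pos (mul_pos hT_pos (pow_pos (phi_pos hs 0) 2))

/-- Bias of the naive weight: for `g(t) = -c(t - t*)`, `σ(t) = φ_s(g(t))`,
`T(t) = exp(-∫₀^t σ)` and `w = T σ`, one has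
`w'(t*) = -T(t*) φ_s(0)² < 0`; in particular `w` has no local maximum at the
surface point `t*`. -/
theorem naive_weight_biased (s c tstar : ℝ) (hs : 0 < s) (hc : 0 < c)
    (σ T w : ℝ → ℝ)
    (hσ : σ = fun t => phi s (-c * (t - tstar)))
    (hT : T = fun t => Real.exp (-(∫ u in (0 : ℝ)..t, σ u)))
    (hw : w = fun t => T t * σ t) :
    HasDerivAt w (-(T tstar) * (phi s 0) ^ 2) tstar ∧
      -(T tstar) * (phi s 0) ^ 2 < 0 :=
  naive_weight_biased_general s c tstar hs σ T w hσ hT hw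
end

section
/- Occlusion-awareness of the NeuS weight for two identical planar crossings: let g be piecewise affine crossing zero from above at t*_1 and again at t*_2 > t*_1 with identical slope -c near both crossings (and g increasing in between, where ρ is clipped to 0). Then the weight w(t) = T(t)ρ(t) satisfies w(t*_1) > w(t*_2). -/
open Real Filter MeasureTheory

/-- Occlusion-awareness of the NeuS weight: if the SDF `g` crosses zero at two
points `t₁* < t₂*` with identical slope `-c` at both crossings, then the weight
`w = T ρ` with clipped opaque density satisfies `w(t₁*) > w(t₂*)`. -/
theorem neus_weight_occlusion_aware (s c t1 t2 : ℝ) (hs : 0 < s) (hc : 0 < c)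
    (h12 : t1 < t2)
    (g g' : ℝ → ℝ) (hg : ∀ t, HasDerivAt g (g' t) t) (hg' : Continuous g')
    (hz1 : g t1 = 0) (hz2 : g t2 = 0)
    (hs1 : g' t1 = -c) (hs2 : g' t2 = -c)
    (ρ T w : ℝ → ℝ)
    (hρ : ρ = fun t => max (-g' t * phi s (g t) / Phi s (g t)) 0)
    (hT : T = fun t => Real.exp (-(∫ u in (0 : ℝ)..t, ρ u)))
    (hw : w = fun t => T t * ρ t) :
    w t2 < w t1 := by
  have hg_cont : Continuous g :=
    continuous_iff_continuousAt.mpr fun t => (hg t).continuousAt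
  have hPhi_pos : ∀ x, 0 < Phi s x := by
    intro x; unfold Phi; positivity
  have hcont_phi : Continuous (fun x => phi s x) := by
    unfold phi
    apply Continuous.div (by continuity) (by continuity)
    intro x; positivity
  have hcont_Phi : Continuous (fun x => Phi s x) := by
    unfold Phi
    apply Continuous.inv₀ (by continuity)
    intro x; positivity
  have hρ_cont : Continuous ρ := by
    rw [hρ]
    refine Continuous.max ?_ continuous_const
    exact Continuous.div (hg'.neg.mul (hcont_phi.comp hg_cont))
      (hcont_Phi.comp hg_cont) (fun t => (hPhi_pos _).ne')
  have hρ_nonneg : ∀ t, 0 ≤ ρ t := by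
    rw [hρ]; intro t; exact le_max_right _ _
  have hval : (0:ℝ) < c * phi s 0 / Phi s 0 := by
    unfold phi Phi; positivity
  have hρ1 : ρ t1 = c * phi s 0 / Phi s 0 := by
    rw [hρ]; simp only [hz1, hs1, neg_neg]
    exact max_eq_left hval.le
  have hρ2 : ρ t2 = c * phi s 0 / Phi s 0 := by
    rw [hρ]; simp only [hz2, hs2, neg_neg]
    exact max_eq_left hval.le
  have hρ1pos : 0 < ρ t1 := hρ1 ▸ hval
  have hint : ∀ a b : ℝ, IntervalIntegrable ρ volume a b :=
    fun a b => hρ_cont.intervalIntegrable a b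
  -- find a small interval to the right of t1 where ρ is positive
  obtain ⟨δ, hδpos, hδ⟩ := Metric.continuousAt_iff.mp (hρ_cont.continuousAt (x := t1))
    (ρ t1) hρ1pos
  set m : ℝ := min (t1 + δ / 2) ((t1 + t2) / 2) with hm
  have hmt1 : t1 < m := by
    apply lt_min <;> linarith
  have hmt2 : m ≤ t2 := le_trans (min_le_right _ _) (by linarith)
  have hpos_on : ∀ x ∈ Set.Ioo t1 m, 0 < ρ x := by
    intro x hx
    have hxd : dist x t1 < δ := by
      rw [Real.dist_eq, abs_of_pos (by linarith [hx.1])]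
      have := hx.2
      have := min_le_left (t1 + δ / 2) ((t1 + t2) / 2)
      have : x < t1 + δ / 2 := lt_of_lt_of_le hx.2 (min_le_left _ _)
      linarith
    have := hδ hxd
    rw [Real.dist_eq, abs_lt] at this
    linarith [this.1]
  have hpos1 : 0 < ∫ u in t1..m, ρ u :=
    intervalIntegral.intervalIntegral_pos_of_pos_on (hint t1 m) hpos_on hmt1
  have hnn2 : 0 ≤ ∫ u in m..t2, ρ u :=
    intervalIntegral.integral_nonneg hmt2 (fun x _ => hρ_nonneg x)
  have hsplit : (∫ u in t1..t2, ρ u) = (∫ u in t1..m, ρ u) + ∫ u in m..t2, ρ u :=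
    (intervalIntegral.integral_add_adjacent_intervals (hint t1 m) (hint m t2)).symm
  have hmid : 0 < ∫ u in t1..t2, ρ u := by rw [hsplit]; linarith
  have hsplit2 : (∫ u in (0:ℝ)..t2, ρ u)
      = (∫ u in (0:ℝ)..t1, ρ u) + ∫ u in t1..t2, ρ u :=
    (intervalIntegral.integral_add_adjacent_intervals (hint 0 t1) (hint t1 t2)).symm
  have hTlt : T t2 < T t1 := by
    rw [hT]
    apply Real.exp_lt_exp.mpr
    rw [hsplit2]; linarith
  rw [hw]
  simp only [hρ1, hρ2]
  exact mul_lt_mul_of_pos_right hTlt hval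
end
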